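/- Let G be a symmetric n×n real matrix with nonnegative entries and zero diagonal, α > 0, β > 0, c > 0 with α·β·c < 1, and let σ ∈ ℝ^n with σ_i ≥ 0 satisfy diag(σ)·G·σ = c·σ (balanced neighborhood equity) and suppose I − α·β·diag(σ)·G is invertible. Fix distinct indices i, j, and for t near 0 define G(t) = G + t·(E_{ij} + E_{ji}), a(t) = α·(I − α·β·diag(σ)·G(t))^{-1}·σ, and Y(t) = Σ_l a_l(t) + (β/2)·Σ_{l,m} G(t)_{lm}·a_l(t)·a_m(t). Then Y is differentiable at t = 0 and Y'(0) = β·σ_i·σ_j·α²·( 2/(1 − α·β·c)³ + 1/(1 − α·β·c)² ). In particular, the marginal value of strengthening the link between i and j is proportional to the product σ_i·σ_j of their equity shares, with a proportionality constant independent of i and j. -/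

import Mathlib

/-!
Write `M = 1 - αβ·diag(σ)·G` and `d = 1 - αβc`. Balance gives `M σ = d σ`, so `a(0) = (α/d) σ`,
and differentiating the resolvent gives `a'(0) = (α²β/d) M⁻¹ diag(σ) E σ` for the perturbation
direction `E`. By symmetry of `G` and balance, `Gσ` is a left eigenvector of `M` with eigenvalue
`d` and `1ᵀ M = 1ᵀ - αβ (Gσ)ᵀ`; hence `1ᵀ M⁻¹ diag(σ) z = σᵀz / d` and
`(Gσ)ᵀ M⁻¹ diag(σ) z = c σᵀz / d`. With these, every term of `Y'(0)` is a multiple of `σᵀ E σ`,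
which equals `2 σ_i σ_j` for `E = E_ij + E_ji`.
-/

open Matrix

section Resolvent

/- The `L∞` operator norm only serves to reach `hasFDerivAt_ringInverse`; its topology is
definitionally the product topology, so the statements below do not depend on it. -/
attribute [local instance] Matrix.linftyOpNormedRing Matrix.linftyOpNormedAlgebra

variable {𝕜 ι : Type*} [RCLike 𝕜] [Fintype ι] [DecidableEq ι]

theorem Matrix.hasDerivAt_inv {A : 𝕜 → Matrix ι ι 𝕜} {A' : Matrix ι ι 𝕜} {t : 𝕜}
    (hA : HasDerivAt A A' t) (ht : IsUnit (A t)) :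
    HasDerivAt (fun s => (A s)⁻¹) (-((A t)⁻¹ * A' * (A t)⁻¹)) t := by
  obtain ⟨u, hu⟩ := ht
  convert (hasFDerivAt_ringInverse (𝕜 := 𝕜) u).comp_hasDerivAt_of_eq t hA hu using 1
  all_goals try rfl
  · exact funext fun s => nonsing_inv_eq_ringInverse _
  · simp [← hu]

theorem Matrix.hasDerivAt_mulVec {A : 𝕜 → Matrix ι ι 𝕜} {A' : Matrix ι ι 𝕜} {t : 𝕜}
    (hA : HasDerivAt A A' t) (v : ι → 𝕜) :
    HasDerivAt (fun s => A s *ᵥ v) (A' *ᵥ v) t := by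
  convert (LinearMap.toContinuousLinearMap ((mulVecBilin 𝕜 𝕜).flip v)).hasFDerivAt.comp_hasDerivAt
    t hA using 1 <;> rfl

theorem Matrix.hasDerivAt_sub_smul_inv_mulVec {A : Matrix ι ι 𝕜} (hA : IsUnit A)
    (N : Matrix ι ι 𝕜) (v : ι → 𝕜) :
    HasDerivAt (fun t : 𝕜 => (A - t • N)⁻¹ *ᵥ v) ((A⁻¹ * N * A⁻¹) *ᵥ v) 0 := by
  have hpath : HasDerivAt (fun t : 𝕜 => A - t • N) (-N) 0 := by
    convert ((hasDerivAt_id (0 : 𝕜)).smul_const N).const_sub A using 1 <;> first | rfl | simp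
  simpa using hasDerivAt_mulVec (hasDerivAt_inv hpath (by simpa using hA)) v

end Resolvent

section LinearAlgebra

variable {R ι : Type*} [Fintype ι] [DecidableEq ι]

theorem Matrix.inv_mulVec_eq_inv_smul [Field R] {A : Matrix ι ι R} (hA : IsUnit A) {v : ι → R}
    {d : R} (hd : d ≠ 0) (hv : A *ᵥ v = d • v) : A⁻¹ *ᵥ v = d⁻¹ • v := by
  rw [eq_inv_smul_iff₀ hd, ← mulVec_smul, ← hv, mulVec_mulVec,
    nonsing_inv_mul _ ((isUnit_iff_isUnit_det A).1 hA), one_mulVec]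

theorem Matrix.vecMul_dotProduct_inv_mulVec [CommRing R] {A : Matrix ι ι R} (hA : IsUnit A)
    (u y : ι → R) : (u ᵥ* A) ⬝ᵥ (A⁻¹ *ᵥ y) = u ⬝ᵥ y := by
  rw [← dotProduct_mulVec, mulVec_mulVec, mul_nonsing_inv _ ((isUnit_iff_isUnit_det A).1 hA),
    one_mulVec]

theorem Matrix.one_vecMul_diagonal [Semiring R] (v : ι → R) : 1 ᵥ* diagonal v = v := by
  ext l
  simp [vecMul_diagonal]

theorem Matrix.dotProduct_single_add_single_mulVec [CommSemiring R] (σ : ι → R) (i j : ι) :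
    σ ⬝ᵥ ((single i j (1 : R) + single j i 1) *ᵥ σ) = 2 * (σ i * σ j) := by
  rw [add_mulVec, single_mulVec, single_mulVec, ← Pi.single, ← Pi.single, dotProduct_add,
    dotProduct_single, dotProduct_single]
  ring

end LinearAlgebra

section Balanced

variable {K ι : Type*} [Field K] [Fintype ι] [DecidableEq ι] {G : Matrix ι ι K} {σ : ι → K}
  {c : K}

theorem mulVec_one_sub_smul_of_balanced (hbal : (diagonal σ * G) *ᵥ σ = c • σ) (k : K) :
    (1 - k • (diagonal σ * G)) *ᵥ σ = (1 - k * c) • σ := by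
  rw [sub_mulVec, one_mulVec, smul_mulVec, hbal, smul_smul, sub_smul, one_smul]

theorem mulVec_vecMul_diagonal_of_balanced (hbal : (diagonal σ * G) *ᵥ σ = c • σ) :
    (G *ᵥ σ) ᵥ* diagonal σ = c • σ := by
  rw [← hbal, ← mulVec_mulVec]
  ext l
  simp [vecMul_diagonal, mulVec_diagonal, mul_comm]

theorem vecMul_one_sub_smul_of_balanced (hG : G.IsSymm)
    (hbal : (diagonal σ * G) *ᵥ σ = c • σ) (k : K) :
    (G *ᵥ σ) ᵥ* (1 - k • (diagonal σ * G)) = (1 - k * c) • (G *ᵥ σ) := by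
  rw [vecMul_sub, vecMul_one, vecMul_smul, ← vecMul_vecMul,
    mulVec_vecMul_diagonal_of_balanced hbal, smul_vecMul, ← mulVec_transpose, hG.eq,
    smul_smul, sub_smul, one_smul]

theorem one_vecMul_one_sub_smul (hG : G.IsSymm) (k : K) :
    (1 : ι → K) ᵥ* (1 - k • (diagonal σ * G)) = 1 - k • (G *ᵥ σ) := by
  rw [vecMul_sub, vecMul_one, vecMul_smul, ← vecMul_vecMul, one_vecMul_diagonal,
    ← mulVec_transpose, hG.eq]

theorem mulVec_dotProduct_inv_mulVec_diagonal_of_balanced (hG : G.IsSymm)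
    (hbal : (diagonal σ * G) *ᵥ σ = c • σ) {k : K} (hd : 1 - k * c ≠ 0)
    (hM : IsUnit (1 - k • (diagonal σ * G))) (z : ι → K) :
    (G *ᵥ σ) ⬝ᵥ ((1 - k • (diagonal σ * G))⁻¹ *ᵥ (diagonal σ *ᵥ z))
      = c * (σ ⬝ᵥ z) / (1 - k * c) := by
  have hleft : G *ᵥ σ = (1 - k * c)⁻¹ • ((G *ᵥ σ) ᵥ* (1 - k • (diagonal σ * G))) := by
    rw [vecMul_one_sub_smul_of_balanced hG hbal, inv_smul_smul₀ hd]
  rw [hleft, smul_dotProduct, vecMul_dotProduct_inv_mulVec hM, dotProduct_mulVec,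
    mulVec_vecMul_diagonal_of_balanced hbal, smul_dotProduct, smul_eq_mul, smul_eq_mul,
    inv_mul_eq_div]

theorem one_dotProduct_inv_mulVec_diagonal_of_balanced (hG : G.IsSymm)
    (hbal : (diagonal σ * G) *ᵥ σ = c • σ) {k : K} (hd : 1 - k * c ≠ 0)
    (hM : IsUnit (1 - k • (diagonal σ * G))) (z : ι → K) :
    1 ⬝ᵥ ((1 - k • (diagonal σ * G))⁻¹ *ᵥ (diagonal σ *ᵥ z)) = σ ⬝ᵥ z / (1 - k * c) := by
  have hone : (1 : ι → K) = 1 ᵥ* (1 - k • (diagonal σ * G)) + k • (G *ᵥ σ) := by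
    rw [one_vecMul_one_sub_smul hG, sub_add_cancel]
  rw [hone, add_dotProduct, vecMul_dotProduct_inv_mulVec hM, smul_dotProduct,
    mulVec_dotProduct_inv_mulVec_diagonal_of_balanced hG hbal hd hM, dotProduct_mulVec,
    one_vecMul_diagonal, smul_eq_mul]
  field_simp
  ring

end Balanced

noncomputable section TeamPerformance

variable {ι : Type*} [Fintype ι]

def teamPerformance (β : ℝ) (G : Matrix ι ι ℝ) (a : ι → ℝ) : ℝ :=
  ∑ l, a l + β / 2 * ∑ l, ∑ m, G l m * a l * a m

theorem hasDerivAt_teamPerformance {β : ℝ} (G E : Matrix ι ι ℝ) {x : ℝ → ι → ℝ}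
    {x' : ι → ℝ} {t : ℝ} (hx : HasDerivAt x x' t) :
    HasDerivAt (fun s => teamPerformance β (G + s • E) (x s))
      (1 ⬝ᵥ x' + β / 2 * (x t ⬝ᵥ (E *ᵥ x t) + x' ⬝ᵥ ((G + t • E) *ᵥ x t)
        + x t ⬝ᵥ ((G + t • E) *ᵥ x'))) t := by
  have hxl := hasDerivAt_pi.1 hx
  have hGE : ∀ l m, HasDerivAt (fun s => (G + s • E) l m) (E l m) t := fun l m => by
    simpa using ((hasDerivAt_id t).mul_const (E l m)).const_add (G l m)
  unfold teamPerformance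
  refine ((HasDerivAt.fun_sum fun l _ => hxl l).fun_add
    ((HasDerivAt.fun_sum fun l _ => HasDerivAt.fun_sum fun m _ =>
      ((hGE l m).fun_mul (hxl l)).fun_mul (hxl m)).const_mul (β / 2))).congr_deriv ?_
  simp only [dotProduct, mulVec, Pi.one_apply, one_mul, Finset.mul_sum, ← Finset.sum_add_distrib]
  exact Finset.sum_congr rfl fun l _ => congrArg _ (Finset.sum_congr rfl fun m _ => by ring)

variable [DecidableEq ι]

def linearEquilibrium (α β : ℝ) (σ : ι → ℝ) (G : Matrix ι ι ℝ) : ι → ℝ :=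
  α • ((1 - (α * β) • (diagonal σ * G))⁻¹ *ᵥ σ)

theorem hasDerivAt_linearEquilibrium {α β : ℝ} {σ : ι → ℝ} {G : Matrix ι ι ℝ}
    (hM : IsUnit (1 - (α * β) • (diagonal σ * G))) (E : Matrix ι ι ℝ) :
    HasDerivAt (fun t : ℝ => linearEquilibrium α β σ (G + t • E))
      (α • (((1 - (α * β) • (diagonal σ * G))⁻¹ * ((α * β) • (diagonal σ * E))
        * (1 - (α * β) • (diagonal σ * G))⁻¹) *ᵥ σ)) 0 := by
  have hpath : ∀ t : ℝ, 1 - (α * β) • (diagonal σ * (G + t • E))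
      = 1 - (α * β) • (diagonal σ * G) - t • ((α * β) • (diagonal σ * E)) := by
    intro t
    rw [mul_add, Matrix.mul_smul, smul_add, smul_comm (α * β) t, sub_add_eq_sub_sub]
  simp only [linearEquilibrium, hpath]
  exact (hasDerivAt_sub_smul_inv_mulVec hM _ σ).const_smul α

theorem linearEquilibrium_of_balanced {α β c : ℝ} {σ : ι → ℝ} {G : Matrix ι ι ℝ}
    (hbal : (diagonal σ * G) *ᵥ σ = c • σ) (hd : 1 - α * β * c ≠ 0)
    (hM : IsUnit (1 - (α * β) • (diagonal σ * G))) :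
    linearEquilibrium α β σ G = (α / (1 - α * β * c)) • σ := by
  rw [linearEquilibrium, inv_mulVec_eq_inv_smul hM hd (mulVec_one_sub_smul_of_balanced hbal _),
    smul_smul, div_eq_mul_inv]

theorem hasDerivAt_teamPerformance_linearEquilibrium_of_balanced {α β c : ℝ} {σ : ι → ℝ}
    {G : Matrix ι ι ℝ} (hG : G.IsSymm) (hbal : (diagonal σ * G) *ᵥ σ = c • σ)
    (hd : 1 - α * β * c ≠ 0) (hM : IsUnit (1 - (α * β) • (diagonal σ * G))) (E : Matrix ι ι ℝ) :
    HasDerivAt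
      (fun t : ℝ => teamPerformance β (G + t • E) (linearEquilibrium α β σ (G + t • E)))
      (α ^ 2 * β / 2 * (σ ⬝ᵥ (E *ᵥ σ))
        * (2 / (1 - α * β * c) ^ 3 + 1 / (1 - α * β * c) ^ 2)) 0 := by
  have hperf := hasDerivAt_teamPerformance (β := β) G E (hasDerivAt_linearEquilibrium hM E)
  simp only [zero_smul, add_zero, linearEquilibrium_of_balanced hbal hd hM] at hperf
  set M := 1 - (α * β) • (diagonal σ * G)
  set d := 1 - α * β * c with hd_def
  have hderiv : α • ((M⁻¹ * ((α * β) • (diagonal σ * E)) * M⁻¹) *ᵥ σ)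
      = (α ^ 2 * β / d) • (M⁻¹ *ᵥ (diagonal σ *ᵥ (E *ᵥ σ))) := by
    rw [← mulVec_mulVec, inv_mulVec_eq_inv_smul hM hd (mulVec_one_sub_smul_of_balanced hbal _),
      ← mulVec_mulVec, mulVec_smul, mulVec_smul, smul_mulVec, mulVec_smul, ← mulVec_mulVec,
      smul_smul, smul_smul]
    congr 1
    field_simp
  rw [hderiv] at hperf
  refine hperf.congr_deriv ?_
  simp only [dotProduct_smul, smul_dotProduct, mulVec_smul, smul_eq_mul]
  rw [dotProduct_comm _ (G *ᵥ σ), dotProduct_mulVec σ G, ← mulVec_transpose, hG.eq,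
    mulVec_dotProduct_inv_mulVec_diagonal_of_balanced hG hbal hd hM,
    one_dotProduct_inv_mulVec_diagonal_of_balanced hG hbal hd hM, ← hd_def]
  field_simp
  linear_combination 2 * α ^ 2 * β * (σ ⬝ᵥ (E *ᵥ σ)) * hd_def

end TeamPerformance

theorem statement_18 {n : ℕ} (G : Matrix (Fin n) (Fin n) ℝ)
    (hG_symm : G.IsSymm)
    (α β c : ℝ) (habc : α * β * c < 1)
    (σ : Fin n → ℝ)
    (hbal : (Matrix.diagonal σ * G).mulVec σ = c • σ)
    (hinv : IsUnit ((1 : Matrix (Fin n) (Fin n) ℝ) - (α * β) • (Matrix.diagonal σ * G)))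
    (i j : Fin n)
    (Gt : ℝ → Matrix (Fin n) (Fin n) ℝ)
    (hGt : ∀ t, Gt t
      = G + t • (Matrix.single i j (1 : ℝ) + Matrix.single j i (1 : ℝ)))
    (a : ℝ → Fin n → ℝ)
    (ha : ∀ t, a t = α • ((1 : Matrix (Fin n) (Fin n) ℝ)
        - (α * β) • (Matrix.diagonal σ * Gt t))⁻¹.mulVec σ)
    (Y : ℝ → ℝ)
    (hY : ∀ t, Y t = ∑ l, a t l + β / 2 * ∑ l, ∑ m, Gt t l m * a t l * a t m) :
    HasDerivAt Y
      (β * σ i * σ j * α ^ 2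
        * (2 / (1 - α * β * c) ^ 3 + 1 / (1 - α * β * c) ^ 2)) 0 := by
  have hYfun : Y = fun t : ℝ => teamPerformance β (G + t • (single i j 1 + single j i 1))
      (linearEquilibrium α β σ (G + t • (single i j 1 + single j i 1))) := by
    funext t
    rw [hY, ha, hGt]
    rfl
  rw [hYfun]
  convert hasDerivAt_teamPerformance_linearEquilibrium_of_balanced hG_symm hbal
    (sub_pos.2 habc).ne' hinv _ using 1
  rw [dotProduct_single_add_single_mulVec]
  ring
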